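/- Let S(A) = {a_n} be an independent Stanley sequence, let k ≥ κ(A), set c = a_{2^k} and A_k = {a_0, a_1, ..., a_{2^k − 1}}, and suppose a_{2^k − 1} ≥ λ(A) + ω(A). Then for every integer x, the set (A_k + x) ∪ (A_k + c + x) covers every integer in the set ([x, 3c + x) \ ((A_k ∪ (A_k + c) ∪ O(A)) + x)) ∪ (O(A) + 3c + x). -/

import Mathlib

/-- A set of integers is 3-free if it contains no 3-term arithmetic progression. -/
def ThreeFreeSet (S : Set ℤ) : Prop :=
  ∀ x ∈ S, ∀ y ∈ S, ∀ z ∈ S, x < y → y < z → x + z ≠ 2 * y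

/-- `a` is the Stanley sequence generated greedily from the finite 3-free set `A`
of nonnegative integers containing 0: `a` first enumerates `A` in increasing order,
and for `n ≥ |A|`, `a n` is the least integer exceeding `a (n-1)` keeping the
set of terms so far 3-free. -/
def IsStanleySeq (A : Finset ℤ) (a : ℕ → ℤ) : Prop :=
  (0 : ℤ) ∈ A ∧ (∀ x ∈ A, 0 ≤ x) ∧ ThreeFreeSet ↑A ∧
  StrictMono a ∧ (∀ i < A.card, a i ∈ A) ∧
  ∀ n, A.card ≤ n →
    IsLeast {m : ℤ | a (n - 1) < m ∧ ThreeFreeSet (a '' Set.Iio n ∪ {m})} (a n)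

/-- The two defining conditions of an independent Stanley sequence,
for a given λ and κ. -/
def IndepParams (a : ℕ → ℤ) (lam : ℤ) (κ : ℕ) : Prop :=
  ∀ k, κ ≤ k →
    (∀ i < 2 ^ k, a (2 ^ k + i) = a (2 ^ k) + a i) ∧
    a (2 ^ k) = 2 * a (2 ^ k - 1) + 1 - lam

/-- A Stanley sequence is independent if `IndepParams` holds for some λ and κ. -/
def Independent (a : ℕ → ℤ) : Prop := ∃ lam κ, IndepParams a lam κ

/-- κ(A): the minimal κ witnessing independence. -/
noncomputable def kappa (a : ℕ → ℤ) : ℕ := sInf {κ | ∃ lam, IndepParams a lam κ}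

/-- λ(A), recovered from the defining equation at k = κ(A). -/
noncomputable def lambdaA (a : ℕ → ℤ) : ℤ :=
  2 * a (2 ^ kappa a - 1) + 1 - a (2 ^ kappa a)

/-- The repeat factor ρ(A) = a_{2^{κ(A)}}. -/
noncomputable def rho (a : ℕ → ℤ) : ℤ := a (2 ^ kappa a)

/-- The scaling factor α(A), satisfying a_{2^k} = α·3^k for all k ≥ κ(A). -/
noncomputable def scalingFactor (a : ℕ → ℤ) : ℚ :=
  (a (2 ^ kappa a) : ℚ) / 3 ^ kappa a

/-- An integer `x` is covered by a set `S` if there are `y < z < x` in `S`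
with `y, z, x` in arithmetic progression. -/
def Covers (S : Set ℤ) (x : ℤ) : Prop :=
  ∃ y z, y ∈ S ∧ z ∈ S ∧ y < z ∧ z < x ∧ 2 * z = y + x

/-- An integer `x` is jointly covered by `S` and `T` if there are `y < z < x`
with `y ∈ S`, `z ∈ T`, and `y, z, x` in arithmetic progression. -/
def JointlyCovers (S T : Set ℤ) (x : ℤ) : Prop :=
  ∃ y z, y ∈ S ∧ z ∈ T ∧ y < z ∧ z < x ∧ 2 * z = y + x

/-- O(A): nonnegative integers neither in the Stanley sequence nor covered by it. -/
def OSet (a : ℕ → ℤ) : Set ℤ :=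
  {x | 0 ≤ x ∧ x ∉ Set.range a ∧ ¬ Covers (Set.range a) x}

/-- ω(A): the maximum element of O(A). -/
noncomputable def omegaA (a : ℕ → ℤ) : ℤ := sSup (OSet a)

/-- The translate `S + t` of a set of integers. -/
def shift (S : Set ℤ) (t : ℤ) : Set ℤ := (· + t) '' S

/-- A triadic number: a rational whose denominator in lowest terms is a power of 3. -/
def IsTriadic (q : ℚ) : Prop := ∃ j : ℕ, q.den = 3 ^ j

/-!
For `k ≥ κ(A)` the terms of `S(A)` below `3c = a_{2^{k+1}}` are exactly `A_k ∪ (A_k + c)`, and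
the next `2^{k+1}` terms are `3c + (A_k ∪ (A_k + c))`. A point of `[0, 3c)` outside
`A_k ∪ (A_k + c) ∪ O(A)` is covered by `S(A)`, necessarily by terms below it, hence by
`A_k ∪ (A_k + c)`. For `w ∈ O(A)`, if `3c + w` were not covered by `A_k ∪ (A_k + c)`, it would lie
in `O(A)`: it is not a term since `w` is not, a covering progression with both terms in
`3c + S(A)` would cover `w`, and one with a single such term is ruled out by the gap between
`c + a_{2^k-1}` and `3c`, which `a_{2^k-1} ≥ λ + ω` guarantees. But `3c + w > ω`. Everything is
invariant under translation by `x`.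
-/

lemma ThreeFreeSet.mono {S T : Set ℤ} (hT : ThreeFreeSet T) (hST : S ⊆ T) : ThreeFreeSet S :=
  fun x hx y hy z hz => hT x (hST hx) y (hST hy) z (hST hz)

lemma Covers.shift {S : Set ℤ} {z : ℤ} (h : Covers S z) (x : ℤ) :
    Covers (shift S x) (z + x) := by
  obtain ⟨p, q, hp, hq, hpq, hqz, hpqz⟩ := h
  exact ⟨p + x, q + x, ⟨p, hp, rfl⟩, ⟨q, hq, rfl⟩, by omega, by omega, by omega⟩

lemma Covers.mono {S T : Set ℤ} {z : ℤ} (h : Covers S z) (hST : S ⊆ T) : Covers T z := by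
  obtain ⟨p, q, hp, hq, hpq, hqz, hpqz⟩ := h
  exact ⟨p, q, hST hp, hST hq, hpq, hqz, hpqz⟩

lemma shift_union_shift (S : Set ℤ) (c x : ℤ) :
    shift (S ∪ shift S c) x = shift S x ∪ shift S (c + x) := by
  simp only [shift, Set.image_union, Set.image_image, add_assoc, add_comm c x]

lemma covers_of_not_threeFree_union_singleton {S : Set ℤ} {x : ℤ} (hS : ThreeFreeSet S)
    (hlt : ∀ s ∈ S, s < x) (h : ¬ ThreeFreeSet (S ∪ {x})) : Covers S x := by
  simp only [ThreeFreeSet, not_forall, not_not] at h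
  obtain ⟨p, hp, q, hq, r, hr, hpq, hqr, hpqr⟩ := h
  have mem_of_lt : ∀ s ∈ S ∪ {x}, s < x → s ∈ S := by
    rintro s (hs | rfl) hsx
    exacts [hs, absurd hsx (lt_irrefl s)]
  rcases hr with hr | rfl
  · exact absurd hpqr (hS p (mem_of_lt p hp (by linarith [hlt r hr])) q
      (mem_of_lt q hq (by linarith [hlt r hr])) r hr hpq hqr)
  · exact ⟨p, q, mem_of_lt p hp (hpq.trans hqr), mem_of_lt q hq hqr, hpq, hqr, by omega⟩

lemma StrictMono.mem_image_Iio_of_lt {a : ℕ → ℤ} (hmono : StrictMono a) {v : ℤ} {N : ℕ}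
    (hv : v ∈ Set.range a) (hvN : v < a N) : v ∈ a '' Set.Iio N := by
  obtain ⟨m, rfl⟩ := hv
  exact ⟨m, hmono.lt_iff_lt.1 hvN, rfl⟩

lemma StrictMono.covers_image_Iio_of_notMem_oSet {a : ℕ → ℤ} (hmono : StrictMono a) {N : ℕ}
    {v : ℤ} (hv0 : 0 ≤ v) (hvN : v < a N) (hvimg : v ∉ a '' Set.Iio N) (hvO : v ∉ OSet a) :
    Covers (a '' Set.Iio N) v := by
  have hvr : v ∉ Set.range a := fun h => hvimg (hmono.mem_image_Iio_of_lt h hvN)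
  have hcov : Covers (Set.range a) v := by
    by_contra h
    exact hvO ⟨hv0, hvr, h⟩
  obtain ⟨y, z, hy, hz, hyz, hzv, hyzv⟩ := hcov
  exact ⟨y, z, hmono.mem_image_Iio_of_lt hy (by omega), hmono.mem_image_Iio_of_lt hz (by omega),
    hyz, hzv, hyzv⟩

section Block

variable {a : ℕ → ℤ} {N : ℕ} (hblock : ∀ i < N, a (N + i) = a N + a i)
include hblock

lemma image_Iio_two_mul_of_block :
    a '' Set.Iio (2 * N) = a '' Set.Iio N ∪ shift (a '' Set.Iio N) (a N) := by
  ext v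
  simp only [shift, Set.mem_union, Set.mem_image, Set.mem_Iio]
  constructor
  · rintro ⟨m, hm, rfl⟩
    rcases lt_or_ge m N with hmN | hNm
    · exact Or.inl ⟨m, hmN, rfl⟩
    · refine Or.inr ⟨a (m - N), ⟨m - N, by omega, rfl⟩, ?_⟩
      rw [add_comm, ← hblock (m - N) (by omega), Nat.add_sub_cancel' hNm]
  · rintro (⟨m, hm, rfl⟩ | ⟨_, ⟨i, hi, rfl⟩, rfl⟩)
    · exact ⟨m, by omega, rfl⟩
    · exact ⟨N + i, by omega, by rw [hblock i hi, add_comm]⟩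

lemma StrictMono.exists_eq_add_of_block (hmono : StrictMono a) {v : ℤ} {i₀ : ℕ} (hi₀ : i₀ < N)
    (hv : v ∈ Set.range a) (hNv : a N ≤ v) (hvi₀ : v ≤ a N + a i₀) :
    ∃ i < N, v = a N + a i := by
  obtain ⟨m, rfl⟩ := hv
  rw [← hblock i₀ hi₀] at hvi₀
  have hNm : N ≤ m := hmono.le_iff_le.1 hNv
  have hmi₀ : m ≤ N + i₀ := hmono.le_iff_le.1 hvi₀
  refine ⟨m - N, by omega, ?_⟩
  rw [← hblock (m - N) (by omega), Nat.add_sub_cancel' hNm]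

end Block

namespace IsStanleySeq

variable {A : Finset ℤ} {a : ℕ → ℤ} (hA : IsStanleySeq A a)
include hA

lemma strictMono : StrictMono a := hA.2.2.2.1

lemma nonneg (i : ℕ) : 0 ≤ a i := by
  obtain ⟨h0A, hpos, -, hmono, hmem, -⟩ := hA
  exact (hpos _ (hmem 0 (Finset.card_pos.2 ⟨0, h0A⟩))).trans (hmono.monotone (Nat.zero_le i))

lemma image_Iio_card : a '' Set.Iio A.card = A := by
  obtain ⟨-, -, -, hmono, hmem, -⟩ := hA
  have hsub : (Finset.range A.card).image a ⊆ A := by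
    intro y hy
    obtain ⟨i, hi, rfl⟩ := Finset.mem_image.1 hy
    exact hmem i (Finset.mem_range.1 hi)
  have hcard : A.card ≤ ((Finset.range A.card).image a).card := by
    rw [Finset.card_image_of_injective _ hmono.injective, Finset.card_range]
  conv_rhs => rw [← Finset.eq_of_subset_of_card_le hsub hcard, Finset.coe_image, Finset.coe_range]

lemma threeFree_image_Iio (n : ℕ) : ThreeFreeSet (a '' Set.Iio n) := by
  rcases le_or_gt n A.card with hn | hn
  · have hfree : ThreeFreeSet ↑A := hA.2.2.1
    rw [← hA.image_Iio_card] at hfree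
    exact hfree.mono (Set.image_mono fun i hi => lt_of_lt_of_le hi hn)
  · obtain ⟨m, rfl⟩ : ∃ m, n = m + 1 := ⟨n - 1, by omega⟩
    rw [Set.Iio_add_one_eq_Iic, ← Set.Iio_insert, Set.image_insert_eq, Set.insert_eq, Set.union_comm]
    exact ((hA.2.2.2.2.2 m (by omega)).1).2

lemma covers_range_of_mem_Ioo {n : ℕ} {x : ℤ} (hn : A.card ≤ n)
    (hx : x ∈ Set.Ioo (a (n - 1)) (a n)) : Covers (Set.range a) x := by
  obtain ⟨hlo, hhi⟩ := hx
  have hlt : ∀ s ∈ a '' Set.Iio n, s < x := by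
    rintro _ ⟨m, hm, rfl⟩
    exact (hA.strictMono.monotone (by simp only [Set.mem_Iio] at hm; omega)).trans_lt hlo
  have hnot : ¬ ThreeFreeSet (a '' Set.Iio n ∪ {x}) := fun h =>
    hhi.not_ge ((hA.2.2.2.2.2 n hn).2 ⟨hlo, h⟩)
  exact (covers_of_not_threeFree_union_singleton (hA.threeFree_image_Iio n) hlt hnot).mono
    (Set.image_subset_range a _)

lemma covers_range_of_notMem_range {x : ℤ} (hx : a A.card < x) (hxr : x ∉ Set.range a) :
    Covers (Set.range a) x := by
  classical
  have hex : ∃ n, x < a n := by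
    simpa using not_bddAbove_iff.1 hA.strictMono.not_bddAbove_range_of_isSuccArchimedean x
  set n := Nat.find hex
  have hn : x < a n := Nat.find_spec hex
  have hcard : A.card < n := hA.strictMono.lt_iff_lt.1 (hx.trans hn)
  have hlo : a (n - 1) < x :=
    (not_lt.1 (Nat.find_min hex (by omega : n - 1 < n))).lt_of_ne fun h => hxr ⟨_, h⟩
  exact hA.covers_range_of_mem_Ioo hcard.le ⟨hlo, hn⟩

lemma le_omegaA {w : ℤ} (hw : w ∈ OSet a) : w ≤ omegaA a :=
  le_csSup ⟨a A.card, fun _ hv => not_lt.1 fun h => hv.2.2 (hA.covers_range_of_notMem_range h hv.2.1)⟩ hw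

lemma covers_add_of_mem_oSet {M i₀ : ℕ} (hblock : ∀ i < M, a (M + i) = a M + a i)
    (hi₀ : i₀ < M) {w : ℤ} (hw : w ∈ OSet a) (hwi₀ : w ≤ a i₀) (hgap : a (M - 1) + w < a M)
    (hω : omegaA a < a M + w) : Covers (a '' Set.Iio M) (a M + w) := by
  have hmono := hA.strictMono
  obtain ⟨hw0, hwr, hwc⟩ := hw
  by_contra hncov
  suffices a M + w ∈ OSet a from (hA.le_omegaA this).not_gt hω
  refine ⟨by linarith [hA.nonneg M], fun hv => ?_, ?_⟩
  · obtain ⟨i, -, hi⟩ := hmono.exists_eq_add_of_block hblock hi₀ hv (by omega) (by omega)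
    exact hwr ⟨i, by omega⟩
  rintro ⟨y, z, hy, hz, hyz, hzv, hyzv⟩
  rcases lt_or_ge z (a M) with hzM | hMz
  · exact hncov ⟨y, z, hmono.mem_image_Iio_of_lt hy (hyz.trans hzM),
      hmono.mem_image_Iio_of_lt hz hzM, hyz, hzv, hyzv⟩
  obtain ⟨j, -, rfl⟩ := hmono.exists_eq_add_of_block hblock hi₀ hz hMz (by omega)
  rcases lt_or_ge y (a M) with hyM | hMy
  · obtain ⟨m, hm, rfl⟩ := hmono.mem_image_Iio_of_lt hy hyM
    have : a m ≤ a (M - 1) := hmono.monotone (by simp only [Set.mem_Iio] at hm; omega)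
    linarith [hA.nonneg j]
  · obtain ⟨i, -, rfl⟩ := hmono.exists_eq_add_of_block hblock hi₀ hy hMy (by omega)
    exact hwc ⟨a i, a j, ⟨i, rfl⟩, ⟨j, rfl⟩, by omega, by omega, by omega⟩

end IsStanleySeq

lemma Independent.indepParams {a : ℕ → ℤ} (h : Independent a) :
    IndepParams a (lambdaA a) (kappa a) := by
  obtain ⟨lam, κ, hκ⟩ := h
  obtain ⟨lam₀, h₀⟩ := Nat.sInf_mem (⟨κ, lam, hκ⟩ : {κ | ∃ lam, IndepParams a lam κ}.Nonempty)
  have hlam₀ : lam₀ = lambdaA a := by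
    have := (h₀ (kappa a) le_rfl).2
    unfold lambdaA
    omega
  rwa [hlam₀] at h₀

namespace IndepParams

variable {a : ℕ → ℤ} {lam : ℤ} {κ k : ℕ} (hp : IndepParams a lam κ) (hk : κ ≤ k)
include hp hk

lemma apply_two_pow_succ_sub_one : a (2 ^ (k + 1) - 1) = a (2 ^ k) + a (2 ^ k - 1) := by
  have hpos : 0 < 2 ^ k := Nat.two_pow_pos k
  rw [← (hp k hk).1 (2 ^ k - 1) (by omega), pow_succ]
  congr 1
  omega

lemma apply_two_pow_succ : a (2 ^ (k + 1)) = 3 * a (2 ^ k) := by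
  have h₁ := (hp k hk).2
  have h₂ := (hp (k + 1) (by omega)).2
  rw [hp.apply_two_pow_succ_sub_one hk] at h₂
  omega

end IndepParams

/-- Lemma 3.2(c): `(A_k + x) ∪ (A_k + c + x)` covers
`([x, 3c+x) \ ((A_k ∪ (A_k + c) ∪ O(A)) + x)) ∪ (O(A) + 3c + x)`. -/
theorem cover_part_c (A : Finset ℤ) (a : ℕ → ℤ)
    (hA : IsStanleySeq A a) (hInd : Independent a) (k : ℕ) (hk : kappa a ≤ k)
    (c : ℤ) (hc : c = a (2 ^ k))
    (Ak : Set ℤ) (hAk : Ak = a '' Set.Iio (2 ^ k))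
    (hbound : lambdaA a + omegaA a ≤ a (2 ^ k - 1)) :
    ∀ x : ℤ,
      ∀ z ∈ (Set.Ico x (3 * c + x) \ shift (Ak ∪ shift Ak c ∪ OSet a) x) ∪
          shift (OSet a) (3 * c + x),
        Covers (shift Ak x ∪ shift Ak (c + x)) z := by
  have hp := hInd.indepParams
  have hc' := (hp k hk).2
  have htop := hp.apply_two_pow_succ_sub_one hk
  have h3c : a (2 ^ (k + 1)) = 3 * c := by rw [hp.apply_two_pow_succ hk, hc]
  have hB : Ak ∪ shift Ak c = a '' Set.Iio (2 ^ (k + 1)) := by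
    rw [hAk, hc, pow_succ, mul_comm, image_Iio_two_mul_of_block (hp k hk).1]
  have ha' := hA.nonneg (2 ^ k - 1)
  intro x z hz
  suffices Covers (Ak ∪ shift Ak c) (z - x) by
    simpa [← shift_union_shift] using this.shift x
  rw [hB]
  rcases hz with ⟨⟨hxz, hzc⟩, hzB⟩ | ⟨w, hw, rfl⟩
  · exact hA.strictMono.covers_image_Iio_of_notMem_oSet (by omega) (by omega)
      (fun h => hzB ⟨z - x, Or.inl (hB ▸ h), by ring⟩) (fun h => hzB ⟨z - x, Or.inr h, by ring⟩)
  · -- `c = 2 a_{2^k-1} + 1 - λ` and `ω ≤ a_{2^k-1} - λ` give `w ≤ c`, `c + a_{2^k-1} + w < 3c`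
    -- and `ω < 3c + w`.
    have hwω := hA.le_omegaA hw
    have hw0 := hw.1
    have hcov := hA.covers_add_of_mem_oSet (hp (k + 1) (by omega)).1
      (Nat.pow_lt_pow_right one_lt_two k.lt_succ_self) hw (by omega) (by omega) (by omega)
    rw [h3c] at hcov
    convert hcov using 1
    ring
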